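/- The function C_ρ(t) := (t²/2) · ₂F₁(5/6, 5/6; 5/3; -2t³) / ₂F₁(1/6, 1/6; 1/3; -2t³) is well-defined and holomorphic on the disc |t| < 1/∛2, and satisfies C_ρ(0) = 0. -/

import Mathlib

open Complex

/-- The Gaussian hypergeometric series. -/
noncomputable def hyp2F1 (a b c z : ℂ) : ℂ :=
  ∑' n : ℕ, (ascPochhammer ℂ n).eval a * (ascPochhammer ℂ n).eval b /
    ((ascPochhammer ℂ n).eval c * (n.factorial : ℂ)) * z ^ n

/-- `C_ρ(t) = (t²/2) · ₂F₁(5/6,5/6;5/3;-2t³)/₂F₁(1/6,1/6;1/3;-2t³)`. -/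
noncomputable def Crho (t : ℂ) : ℂ :=
  t ^ 2 / 2 * hyp2F1 (5/6) (5/6) (5/3) (-2 * t ^ 3) /
    hyp2F1 (1/6) (1/6) (1/3) (-2 * t ^ 3)
/-!
On the unit disc a power series `∑ bₙ zⁿ` with `b₀ > 0` and `bₙ` decreasing to a nonnegative
limit has no zeros (Eneström–Kakeya): `(1 - z) ∑ bₙ zⁿ = b₀ - ∑ (bₙ - bₙ₊₁) zⁿ⁺¹`, and the last
series has norm at most `‖z‖ ∑ (bₙ - bₙ₊₁) ≤ ‖z‖ b₀ < b₀`. For real `0 < a ≤ c` and `0 < b ≤ 1`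
the coefficients of `₂F₁(a, b; c; ·)` decrease from `1`, since their successive ratios are
`(a + n)(b + n) / ((c + n)(n + 1)) ≤ 1`; being bounded, they also make `₂F₁` holomorphic on the
disc. Both parameter triples in `C_ρ` are of this kind, and `t ↦ -2t³` maps `|t| < 1/∛2` into
the unit disc.
-/

open Metric

section PowerSeries

variable {𝕜 : Type*} [NontriviallyNormedField 𝕜] [CompleteSpace 𝕜]

theorem summable_mul_pow_of_norm_le {b : ℕ → 𝕜} {C : ℝ} (hb : ∀ n, ‖b n‖ ≤ C) {z : 𝕜}
    (hz : ‖z‖ < 1) : Summable fun n => b n * z ^ n := by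
  refine Summable.of_norm_bounded ((summable_geometric_of_lt_one (norm_nonneg z) hz).mul_left C)
    fun n => ?_
  rw [norm_mul, norm_pow]
  exact mul_le_mul_of_nonneg_right (hb n) (by positivity)

theorem differentiableOn_tsum_mul_pow_of_norm_le {b : ℕ → 𝕜} {C : ℝ} (hb : ∀ n, ‖b n‖ ≤ C) :
    DifferentiableOn 𝕜 (fun z => ∑' n, b n * z ^ n) (ball 0 1) := by
  set p := FormalMultilinearSeries.ofScalars 𝕜 b
  have hp : (1 : ENNReal) ≤ p.radius := by
    simpa using p.le_radius_of_bound C (r := 1) fun n => by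
      simpa [p, FormalMultilinearSeries.ofScalars_norm] using hb n
  have hsum : FormalMultilinearSeries.ofScalarsSum b = fun z : 𝕜 => ∑' n, b n * z ^ n := by
    simpa only [smul_eq_mul] using FormalMultilinearSeries.ofScalarsSum_eq_tsum (E := 𝕜) b
  rw [← hsum, ← eball_ofReal, ENNReal.ofReal_one]
  exact (p.hasFPowerSeriesOnBall (one_pos.trans_le hp)).differentiableOn.mono
    (eball_subset_eball hp)

end PowerSeries

section EnestromKakeya

variable {b : ℕ → ℝ}

theorem exists_hasSum_sub_succ_le_of_antitone (hb : Antitone b) (hb0 : ∀ n, 0 ≤ b n) :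
    ∃ s ≤ b 0, HasSum (fun n => b n - b (n + 1)) s := by
  have hd : ∀ n, 0 ≤ b n - b (n + 1) := fun n => sub_nonneg.2 (hb n.le_succ)
  have hpartial : ∀ n, ∑ i ∈ Finset.range n, (b i - b (i + 1)) ≤ b 0 := fun n => by
    rw [Finset.sum_range_sub']
    linarith [hb0 n]
  exact ⟨_, Real.tsum_le_of_sum_range_le hd hpartial,
    (summable_of_sum_range_le hd hpartial).hasSum⟩

theorem one_sub_mul_tsum_mul_pow {R : Type*} [CommRing R] [TopologicalSpace R]
    [IsTopologicalRing R] [T2Space R] {b : ℕ → R} {z : R} (hs : Summable fun n => b n * z ^ n) :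
    (1 - z) * ∑' n, b n * z ^ n = b 0 - ∑' n, (b n - b (n + 1)) * z ^ (n + 1) := by
  have hshift : Summable fun n => b (n + 1) * z ^ (n + 1) := (summable_nat_add_iff 1).2 hs
  have hmul : z * ∑' n, b n * z ^ n = ∑' n, b n * z ^ (n + 1) := by
    rw [← hs.tsum_mul_left]
    exact tsum_congr fun n => by ring
  have hs' : Summable fun n => b n * z ^ (n + 1) := by
    simpa [pow_succ, mul_assoc, mul_comm z] using hs.mul_right z
  simp only [sub_mul, one_mul]
  rw [hmul, hs.tsum_eq_zero_add, hs'.tsum_sub hshift, pow_zero, mul_one]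
  ring

theorem tsum_mul_pow_ne_zero_of_antitone (hb : Antitone b) (hnonneg : ∀ n, 0 ≤ b n)
    (h0 : 0 < b 0) {z : ℂ} (hz : ‖z‖ < 1) : ∑' n, (b n : ℂ) * z ^ n ≠ 0 := by
  obtain ⟨s, hs, hsum⟩ := exists_hasSum_sub_succ_le_of_antitone hb hnonneg
  have hbound : ‖∑' n, ((b n : ℂ) - b (n + 1)) * z ^ (n + 1)‖ ≤ s * ‖z‖ := by
    refine tsum_of_norm_bounded (hsum.mul_right ‖z‖) fun n => ?_
    have hd : 0 ≤ b n - b (n + 1) := sub_nonneg.2 (hb n.le_succ)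
    rw [norm_mul, norm_pow, ← ofReal_sub, norm_real, Real.norm_of_nonneg hd]
    exact mul_le_mul_of_nonneg_left (pow_le_of_le_one (norm_nonneg z) hz.le n.succ_ne_zero) hd
  have hbdd : ∀ n, ‖(b n : ℂ)‖ ≤ b 0 := fun n => by
    rw [norm_real, Real.norm_of_nonneg (hnonneg n)]
    exact hb n.zero_le
  intro hzero
  have key := one_sub_mul_tsum_mul_pow (summable_mul_pow_of_norm_le hbdd hz)
  rw [hzero, mul_zero, eq_comm, sub_eq_zero] at key
  have : b 0 ≤ s * ‖z‖ := by simpa [← key, abs_of_pos h0] using hbound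
  linarith [mul_le_mul_of_nonneg_right hs (norm_nonneg z), mul_lt_of_lt_one_right h0 hz]

end EnestromKakeya

section Hypergeometric

open Nat

noncomputable def hyp2F1Coeff (a b c : ℝ) (n : ℕ) : ℝ :=
  (ascPochhammer ℝ n).eval a * (ascPochhammer ℝ n).eval b /
    ((ascPochhammer ℝ n).eval c * n !)

theorem ascPochhammer_eval_ofReal (n : ℕ) (x : ℝ) :
    (ascPochhammer ℂ n).eval (x : ℂ) = (ascPochhammer ℝ n).eval x := by
  rw [ascPochhammer_eval₂ ofRealHom, ← ofRealHom_eq_coe, Polynomial.eval₂_at_apply,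
    ofRealHom_eq_coe]

theorem hyp2F1_ofReal (a b c : ℝ) (z : ℂ) :
    hyp2F1 a b c z = ∑' n, (hyp2F1Coeff a b c n : ℂ) * z ^ n := by
  simp only [hyp2F1, hyp2F1Coeff, ascPochhammer_eval_ofReal]
  push_cast
  rfl

variable {a b c : ℝ}

theorem hyp2F1Coeff_zero : hyp2F1Coeff a b c 0 = 1 := by
  simp [hyp2F1Coeff]

theorem hyp2F1Coeff_pos (ha : 0 < a) (hb : 0 < b) (hc : 0 < c) (n : ℕ) :
    0 < hyp2F1Coeff a b c n := by
  unfold hyp2F1Coeff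
  have := ascPochhammer_pos n a ha
  have := ascPochhammer_pos n b hb
  have := ascPochhammer_pos n c hc
  positivity

theorem hyp2F1Coeff_succ (hc : 0 < c) (n : ℕ) :
    hyp2F1Coeff a b c (n + 1) =
      hyp2F1Coeff a b c n * ((a + n) * (b + n) / ((c + n) * (n + 1))) := by
  have := (ascPochhammer_pos n c hc).ne'
  have : c + n ≠ 0 := by positivity
  rw [hyp2F1Coeff, hyp2F1Coeff, ascPochhammer_succ_eval, ascPochhammer_succ_eval,
    ascPochhammer_succ_eval, factorial_succ]
  push_cast
  field_simp

theorem hyp2F1Coeff_antitone (ha : 0 < a) (hb : 0 < b) (hc : 0 < c) (hac : a ≤ c) (hb1 : b ≤ 1) :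
    Antitone (hyp2F1Coeff a b c) := by
  refine antitone_nat_of_succ_le fun n => ?_
  have hratio : (a + n) * (b + n) / ((c + n) * (n + 1)) ≤ 1 := by
    rw [div_le_one (by positivity)]
    exact mul_le_mul (by linarith) (by linarith) (by positivity) (by positivity)
  rw [hyp2F1Coeff_succ hc]
  exact mul_le_of_le_one_right (hyp2F1Coeff_pos ha hb hc n).le hratio

theorem hyp2F1_ne_zero (ha : 0 < a) (hb : 0 < b) (hc : 0 < c) (hac : a ≤ c) (hb1 : b ≤ 1)
    {z : ℂ} (hz : ‖z‖ < 1) : hyp2F1 a b c z ≠ 0 := by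
  rw [hyp2F1_ofReal]
  exact tsum_mul_pow_ne_zero_of_antitone (hyp2F1Coeff_antitone ha hb hc hac hb1)
    (fun n => (hyp2F1Coeff_pos ha hb hc n).le) (by rw [hyp2F1Coeff_zero]; exact one_pos) hz

theorem differentiableOn_hyp2F1 (ha : 0 < a) (hb : 0 < b) (hc : 0 < c) (hac : a ≤ c)
    (hb1 : b ≤ 1) : DifferentiableOn ℂ (hyp2F1 a b c) (ball 0 1) := by
  have hbdd : ∀ n, ‖(hyp2F1Coeff a b c n : ℂ)‖ ≤ 1 := fun n => by
    rw [norm_real, Real.norm_of_nonneg (hyp2F1Coeff_pos ha hb hc n).le, ← hyp2F1Coeff_zero]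
    exact hyp2F1Coeff_antitone ha hb hc hac hb1 n.zero_le
  rw [show hyp2F1 a b c = _ from funext (hyp2F1_ofReal a b c)]
  exact differentiableOn_tsum_mul_pow_of_norm_le hbdd

end Hypergeometric

theorem mapsTo_neg_two_mul_pow_three :
    Set.MapsTo (fun t : ℂ => -2 * t ^ 3) (ball 0 (1 / (2 : ℝ) ^ ((1 : ℝ) / 3))) (ball 0 1) := by
  intro t ht
  rw [mem_ball_zero_iff] at ht ⊢
  have hcube : ((2 : ℝ) ^ ((1 : ℝ) / 3)) ^ 3 = 2 := by
    rw [← Real.rpow_natCast, ← Real.rpow_mul zero_le_two]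
    norm_num
  have h3 := pow_lt_pow_left₀ ht (norm_nonneg t) three_ne_zero
  rw [div_pow, one_pow, hcube] at h3
  rw [norm_mul, norm_pow, norm_neg, RCLike.norm_ofNat]
  linarith

/-- `C_ρ` is well-defined (denominator nonvanishing) and holomorphic on
`|t| < 1/∛2`, with `C_ρ(0) = 0`. -/
theorem stmt_4 :
    (∀ t ∈ Metric.ball (0 : ℂ) (1 / (2 : ℝ) ^ ((1 : ℝ)/3)),
      hyp2F1 (1/6) (1/6) (1/3) (-2 * t ^ 3) ≠ 0) ∧
    DifferentiableOn ℂ Crho (Metric.ball (0 : ℂ) (1 / (2 : ℝ) ^ ((1 : ℝ)/3))) ∧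
    Crho 0 = 0 := by
  have hden : ∀ t ∈ ball (0 : ℂ) (1 / (2 : ℝ) ^ ((1 : ℝ) / 3)),
      hyp2F1 (1/6) (1/6) (1/3) (-2 * t ^ 3) ≠ 0 := fun t ht => by
    have := hyp2F1_ne_zero (a := 1/6) (b := 1/6) (c := 1/3) (by norm_num) (by norm_num)
      (by norm_num) (by norm_num) (by norm_num)
      (mem_ball_zero_iff.1 (mapsTo_neg_two_mul_pow_three ht))
    push_cast at this
    exact this
  have hnum := (differentiableOn_hyp2F1 (a := 5/6) (b := 5/6) (c := 5/3) (by norm_num)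
    (by norm_num) (by norm_num) (by norm_num) (by norm_num)).comp (by fun_prop)
    mapsTo_neg_two_mul_pow_three
  have hdenom := (differentiableOn_hyp2F1 (a := 1/6) (b := 1/6) (c := 1/3) (by norm_num)
    (by norm_num) (by norm_num) (by norm_num) (by norm_num)).comp (by fun_prop)
    mapsTo_neg_two_mul_pow_three
  push_cast at hnum hdenom
  exact ⟨hden, (((differentiable_pow 2).div_const 2).differentiableOn.mul hnum).div hdenom hden,
    by simp [Crho]⟩
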